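/- arXiv:2403.19779 — 3 statements merged into one kernel-verified Lean document; each statement's English description precedes it below -/
import Mathlib

section
/- Let R and S be commutative rings. If the categories of R-modules and S-modules are equivalent as additive categories (i.e. R and S are Morita equivalent), then R and S are isomorphic as rings. -/
/-!
The center `End (𝟭 C)` of a category is invariant under equivalence, and an additive
equivalence transports it as a ring. For a commutative ring `R`, the center of `ModuleCat R`
is `R` itself: a natural endomorphism of the identity is determined, by naturality along the
maps `R → M`, `r ↦ r • x`, by its value at `1 ∈ R`, so it is multiplication by a scalar.
-/

open CategoryTheory

universe u v

namespace CategoryTheory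

namespace CatCenter

variable {C D : Type*} [Category C] [Category D] [Preadditive C] [Preadditive D]
  (L : C ⥤ D) (W : MorphismProperty C) [L.IsLocalization W] [L.Additive]

theorem localizationRingHom_bijective [L.Full] [L.Faithful] :
    Function.Bijective (localizationRingHom L W) := by
  refine ⟨fun r s h => ?_, fun s => ?_⟩
  · ext X
    apply L.map_injective
    rw [← localization_app r L W, ← localization_app s L W]
    exact congrArg (fun z : CatCenter D => z.app (L.obj X)) h
  · let r : CatCenter C :=
      { app := fun X => L.preimage (s.app (L.obj X))
        naturality := fun X Y f => L.map_injective (by simp [CatCenter.naturality]) }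
    refine ⟨r, ext_of_localization L W _ _ fun X => ?_⟩
    show (r.localization L W).app (L.obj X) = _
    rw [localization_app]
    exact L.map_preimage _

end CatCenter

noncomputable def Equivalence.catCenterRingEquiv {C D : Type*} [Category C] [Category D]
    [Preadditive C] [Preadditive D] (e : C ≌ D) [e.functor.Additive] :
    CatCenter C ≃+* CatCenter D :=
  have := Functor.IsLocalization.of_isEquivalence e.functor
    (MorphismProperty.isomorphisms C) le_rfl
  RingEquiv.ofBijective _
    (CatCenter.localizationRingHom_bijective e.functor (MorphismProperty.isomorphisms C))

end CategoryTheory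

namespace ModuleCat

variable {R : Type u} [CommRing R]

theorem catCenter_app_apply (z : CatCenter (ModuleCat.{max u v} R)) (M : ModuleCat.{max u v} R)
    (x : M) : z.app M x = (z.app (of R (ULift.{v} R)) (ULift.up 1)).down • x := by
  let f : of R (ULift.{v} R) ⟶ M :=
    ofHom ((LinearMap.toSpanSingleton R M x).comp ULift.moduleEquiv.toLinearMap)
  have hf (a : ULift.{v} R) : f a = a.down • x := rfl
  simpa [hf] using ConcreteCategory.congr_hom (z.naturality f) (ULift.up 1)

variable (R) in
theorem toCatCenter_bijective :
    Function.Bijective (Linear.toCatCenter R (ModuleCat.{max u v} R)) := by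
  refine ⟨fun a b h => ?_, fun z => ⟨(z.app (of R (ULift.{v} R)) (ULift.up 1)).down, ?_⟩⟩
  · simpa using congrArg (fun z : CatCenter (ModuleCat.{max u v} R) =>
      (z.app (of R (ULift.{v} R)) (ULift.up 1)).down) h
  · ext M x
    simp [catCenter_app_apply z M x]

variable (R) in
noncomputable def catCenterRingEquiv : R ≃+* CatCenter (ModuleCat.{max u v} R) :=
  RingEquiv.ofBijective _ (toCatCenter_bijective R)

end ModuleCat

/-- Morita equivalent commutative rings are isomorphic: if `R` and `S` are
commutative rings whose module categories are equivalent via an additive equivalence, then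
`R ≅ S` as rings. -/
theorem commRing_morita_equiv_iso
    (R S : Type) [CommRing R] [CommRing S]
    (e : ModuleCat R ≌ ModuleCat S) [e.functor.Additive] :
    Nonempty (R ≃+* S) :=
  ⟨(ModuleCat.catCenterRingEquiv R).trans
    (e.catCenterRingEquiv.trans (ModuleCat.catCenterRingEquiv S).symm)⟩
end

section
/- Let R and S be rings, M an (R,S)-bimodule and N an (S,R)-bimodule such that M ⊗_S N ≅ R as (R,R)-bimodules and N ⊗_R M ≅ S as (S,S)-bimodules. Then the functor (− ⊗_R M) : ModuleCat R → ModuleCat S is an equivalence of categories. -/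
/-
Rings and bimodules form a bicategory (`Bimod.monBicategory`) in which `− ⊗_R M` is
postcomposition with the 1-morphism `M` (definitionally). Since `M` is invertible up to
2-isomorphism, with inverse `N`, postcomposition with `N` is an inverse functor.
-/

open CategoryTheory CategoryTheory.Limits CategoryTheory.MonoidalCategory

/- A ring is precisely a monoid object in the category of abelian groups
(`ModuleCat ℤ`), a right `R`-module is precisely a bimodule object
`Bimod (Mon.trivial _) R`, and the tensor product of bimodules over the middle ring is
`Bimod.tensorBimod`. -/

noncomputable instance (X : ModuleCat.{0} ℤ) :
    PreservesColimitsOfSize.{0, 0} (tensorRight X) :=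
  preservesColimits_of_natIso
    (F := tensorLeft X)
    (NatIso.ofComponents (fun Y => β_ X Y) (by
      intro Y Z f
      simp))

noncomputable def tensorRightBimodFunctor {R S : Mon (ModuleCat.{0} ℤ)} (M : Bimod R S) :
    Bimod (Mon.trivial (ModuleCat.{0} ℤ)) R ⥤ Bimod (Mon.trivial (ModuleCat.{0} ℤ)) S where
  obj X := X.tensorBimod M
  map f := Bimod.whiskerRight f M
  map_id _ := Bimod.id_whiskerRight_bimod
  map_comp f g := Bimod.comp_whiskerRight_bimod f g M

namespace CategoryTheory.Bicategory

variable {B : Type*} [Bicategory B]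

def postcompCompIsoId (c : B) {a b : B} {f : a ⟶ b} {g : b ⟶ a} (e : f ≫ g ≅ 𝟙 a) :
    postcomp c f ⋙ postcomp c g ≅ 𝟭 (c ⟶ a) :=
  associatorNatIsoLeft c f g ≪≫ (postcomposing c a a).mapIso e ≪≫ rightUnitorNatIso c a

theorem postcomp_isEquivalence_of_iso (c : B) {a b : B} {f : a ⟶ b} {g : b ⟶ a}
    (e₁ : f ≫ g ≅ 𝟙 a) (e₂ : g ≫ f ≅ 𝟙 b) : (postcomp c f).IsEquivalence :=
  Functor.IsEquivalence.mk' (postcomp c g) (postcompCompIsoId c e₁).symm (postcompCompIsoId c e₂)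

end CategoryTheory.Bicategory

/-- Let `R` and `S` be rings (monoid objects in abelian groups), `M` an
`(R,S)`-bimodule and `N` an `(S,R)`-bimodule such that `M ⊗_S N ≅ R` as `(R,R)`-bimodules
and `N ⊗_R M ≅ S` as `(S,S)`-bimodules.  Then the functor
`(− ⊗_R M) : ModuleCat R ⥤ ModuleCat S` is an equivalence of categories. -/
theorem tensorRightBimodFunctor_isEquivalence
    (R S : Mon (ModuleCat.{0} ℤ)) (M : Bimod R S) (N : Bimod S R)
    (h₁ : M.tensorBimod N ≅ Bimod.regular R)
    (h₂ : N.tensorBimod M ≅ Bimod.regular S) :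
    (tensorRightBimodFunctor M).IsEquivalence := by
  let : Bicategory (Mon (ModuleCat.{0} ℤ)) := Bimod.monBicategory
  exact Bicategory.postcomp_isEquivalence_of_iso (B := Mon (ModuleCat.{0} ℤ)) (Mon.trivial _) h₁ h₂
end

section
/- Consider the function q : (ℤ/4 × ℤ/4) → ℂˣ defined by q(a,b) = i^{a·b} (lifting a, b to integers; this is well-defined since i⁴ = 1). There are exactly three subgroups L of ℤ/4 × ℤ/4 of order 4 on which q is identically 1, namely ℤ/4 × {0}, {0} × ℤ/4, and the subgroup {(0,0), (2,0), (0,2), (2,2)}. -/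
/-!
`q (a, b) = i ^ (a b)` equals `1` exactly when `4 ∣ a b`, i.e. on the eight elements with
`a = 0`, `b = 0` or `(a, b) = (2, 2)`. An isotropic element with an odd coordinate is `±(1, 0)`
or `±(0, 1)` and generates a whole axis, which has order 4. If there is no such element, the
subgroup lies in the 2-torsion subgroup `2ℤ/4 × 2ℤ/4`, which also has order 4.
-/

open AddSubgroup

theorem AddSubgroup.card_prod {G H : Type*} [AddGroup G] [AddGroup H]
    (K : AddSubgroup G) (K' : AddSubgroup H) :
    Nat.card (K.prod K') = Nat.card K * Nat.card K' := by
  rw [Nat.card_congr (prodEquiv K K').toEquiv, Nat.card_prod]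

theorem AddSubgroup.prod_top_bot_le_of_mem {n : ℕ} {M : Type*} [AddGroup M]
    {L : AddSubgroup (ZMod n × M)} (h : ((1 : ZMod n), (0 : M)) ∈ L) :
    (⊤ : AddSubgroup (ZMod n)).prod ⊥ ≤ L := by
  rintro ⟨a, b⟩ ⟨-, hb : b = 0⟩
  subst hb
  have : (a.cast : ℤ) • ((1 : ZMod n), (0 : M)) = (a, 0) := by ext <;> simp
  exact this ▸ L.zsmul_mem h _

theorem AddSubgroup.prod_bot_top_le_of_mem {n : ℕ} {M : Type*} [AddGroup M]
    {L : AddSubgroup (M × ZMod n)} (h : ((0 : M), (1 : ZMod n)) ∈ L) :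
    (⊥ : AddSubgroup M).prod ⊤ ≤ L := by
  rintro ⟨a, b⟩ ⟨ha : a = 0, -⟩
  subst ha
  have : (b.cast : ℤ) • ((0 : M), (1 : ZMod n)) = (0, b) := by ext <;> simp
  exact this ▸ L.zsmul_mem h _

theorem ZMod.mem_zmultiples_two_iff (x : ZMod 4) :
    x ∈ zmultiples (2 : ZMod 4) ↔ x = 0 ∨ x = 2 := by
  simp only [mem_zmultiples_iff, zsmul_eq_mul]
  constructor
  · rintro ⟨k, rfl⟩
    generalize (k : ZMod 4) = c
    revert c
    decide
  · rintro (rfl | rfl)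
    exacts [⟨0, by simp⟩, ⟨1, by simp⟩]

theorem ZMod.card_zmultiples_two : Nat.card (zmultiples (2 : ZMod 4)) = 2 := by
  rw [Nat.card_zmultiples]
  exact addOrderOf_eq_prime (by decide) (by decide)

theorem Complex.I_pow_val_mul_val_eq_one_iff (x : ZMod 4 × ZMod 4) :
    Complex.I ^ (x.1.val * x.2.val) = 1 ↔ x.1 = 0 ∨ x.2 = 0 ∨ x = (2, 2) := by
  rw [Complex.isPrimitiveRoot_I.pow_eq_one_iff_dvd]
  revert x
  decide

theorem ZMod.four_isotropic_trichotomy (x : ZMod 4 × ZMod 4)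
    (hx : x.1 = 0 ∨ x.2 = 0 ∨ x = (2, 2)) :
    (x = (1, 0) ∨ -x = (1, 0)) ∨ (x = (0, 1) ∨ -x = (0, 1)) ∨
      ((x.1 = 0 ∨ x.1 = 2) ∧ (x.2 = 0 ∨ x.2 = 2)) := by
  revert x
  decide

theorem ZMod.four_isotropic_subgroup_cases {L : AddSubgroup (ZMod 4 × ZMod 4)}
    (hL : ∀ x ∈ L, x.1 = 0 ∨ x.2 = 0 ∨ x = (2, 2)) :
    ((1, 0) ∈ L ∨ (0, 1) ∈ L) ∨ L ≤ (zmultiples (2 : ZMod 4)).prod (zmultiples 2) := by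
  by_cases hL₁ : (1, 0) ∈ L ∨ (0, 1) ∈ L
  · exact Or.inl hL₁
  refine Or.inr fun x hx => ?_
  rcases four_isotropic_trichotomy x (hL x hx) with h | h | hV
  · exact absurd (Or.inl (h.elim (· ▸ hx) (· ▸ L.neg_mem hx))) hL₁
  · exact absurd (Or.inr (h.elim (· ▸ hx) (· ▸ L.neg_mem hx))) hL₁
  · rwa [mem_prod, mem_zmultiples_two_iff, mem_zmultiples_two_iff]

/-- For the quadratic form `q (a, b) = i ^ (a·b)` on `ℤ/4 × ℤ/4`
(lifting `a`, `b` to integers via `ZMod.val`; well-defined since `i ^ 4 = 1`), there are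
exactly three subgroups `L` of order 4 on which `q` is identically `1`:
`ℤ/4 × {0}`, `{0} × ℤ/4`, and `{(0,0), (2,0), (0,2), (2,2)}`. -/
theorem z4_double_lagrangian_subgroups :
    {L : AddSubgroup (ZMod 4 × ZMod 4) |
        Nat.card L = 4 ∧ ∀ x ∈ L, (Complex.I ^ (x.1.val * x.2.val)) = 1}
      = {(⊤ : AddSubgroup (ZMod 4)).prod (⊥ : AddSubgroup (ZMod 4)),
          (⊥ : AddSubgroup (ZMod 4)).prod (⊤ : AddSubgroup (ZMod 4)),
          (AddSubgroup.zmultiples (2 : ZMod 4)).prod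
            (AddSubgroup.zmultiples (2 : ZMod 4))} := by
  have card_top_bot :
      Nat.card ((⊤ : AddSubgroup (ZMod 4)).prod (⊥ : AddSubgroup (ZMod 4))) = 4 := by
    rw [card_prod, card_top, card_bot, Nat.card_zmod]
  have card_bot_top :
      Nat.card ((⊥ : AddSubgroup (ZMod 4)).prod (⊤ : AddSubgroup (ZMod 4))) = 4 := by
    rw [card_prod, card_top, card_bot, Nat.card_zmod]
  have card_two_two :
      Nat.card ((zmultiples (2 : ZMod 4)).prod (zmultiples (2 : ZMod 4))) = 4 := by
    rw [card_prod, ZMod.card_zmultiples_two]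
  ext L
  simp only [Set.mem_ofPred_eq, Set.mem_insert_iff, Set.mem_singleton_iff,
    Complex.I_pow_val_mul_val_eq_one_iff]
  constructor
  · rintro ⟨hcard, hL⟩
    rcases ZMod.four_isotropic_subgroup_cases hL with (h | h) | h
    · left
      exact (eq_of_le_of_card_ge (prod_top_bot_le_of_mem h) (by rw [hcard, card_top_bot])).symm
    · right; left
      exact (eq_of_le_of_card_ge (prod_bot_top_le_of_mem h) (by rw [hcard, card_bot_top])).symm
    · exact .inr (.inr (eq_of_le_of_card_ge h (by rw [hcard, card_two_two])))
  · rintro (rfl | rfl | rfl)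
    · exact ⟨card_top_bot, fun x hx => .inr (.inl (mem_bot.1 (mem_prod.1 hx).2))⟩
    · exact ⟨card_bot_top, fun x hx => .inl (mem_bot.1 (mem_prod.1 hx).1)⟩
    · refine ⟨card_two_two, fun x hx => ?_⟩
      rw [mem_prod, ZMod.mem_zmultiples_two_iff, ZMod.mem_zmultiples_two_iff] at hx
      revert x
      decide
end
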